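/- arXiv:2412.14128 — 6 statements merged into one kernel-verified Lean document; each statement's English description precedes it below -/
import Mathlib

section
/- Let 𝕋 := ℝ/ℤ with its Haar probability measure, and let α, ν ∈ 𝕋. Let γ : 𝕋 → ℂ be continuous, and let f, f̃, h be families of maps f_θ, f̃_θ, h_θ : ℂ → ℂ indexed by θ ∈ 𝕋 such that: (i) f_θ(γ(θ)) = γ(θ+α) for all θ; (ii) for each θ, f_θ is complex-differentiable at γ(θ) with f_θ'(γ(θ)) ≠ 0, h_θ is complex-differentiable at γ(θ) with h_θ'(γ(θ)) ≠ 0, and f̃_{θ+ν} is complex-differentiable at h_θ(γ(θ)); (iii) the conjugacy relation f̃_{θ+ν} ∘ h_θ = h_{θ+α} ∘ f_θ holds on some neighborhood of γ(θ), for each θ; (iv) the functions θ ↦ f_θ'(γ(θ)) and θ ↦ h_θ'(γ(θ)) are continuous on 𝕋. Define γ̃(φ) := h_{φ−ν}(γ(φ−ν)). Then ∫_𝕋 log |f̃_φ'(γ̃(φ))| dφ = ∫_𝕋 log |f_θ'(γ(θ))| dθ, where log denotes the real logarithm and the integrals are with respect to the Haar probability measure on 𝕋. -/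
open MeasureTheory

/-! Differentiating the conjugacy `f̃_{θ+ν} ∘ h_θ = h_{θ+α} ∘ f_θ` at `γ θ` gives
`f̃'_{θ+ν} · h'_θ = h'_{θ+α} · f'_θ` along the curve, so `log |f̃'_{θ+ν}|` differs from
`log |f'_θ|` by the coboundary `log |h'_{θ+α}| - log |h'_θ|`. Coboundaries of integrable
functions have zero integral against a translation-invariant measure, and the shift by `ν`
does not change the integral either. -/

theorem HasDerivAt.mul_eq_mul_of_comp_eventuallyEq {𝕜 : Type*} [NontriviallyNormedField 𝕜]
    {g₁ k₁ g₂ k₂ : 𝕜 → 𝕜} {g₁' k₁' g₂' k₂' x : 𝕜}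
    (hg₁ : HasDerivAt g₁ g₁' (k₁ x)) (hk₁ : HasDerivAt k₁ k₁' x)
    (hg₂ : HasDerivAt g₂ g₂' (k₂ x)) (hk₂ : HasDerivAt k₂ k₂' x)
    (hcomp : g₁ ∘ k₁ =ᶠ[nhds x] g₂ ∘ k₂) :
    g₁' * k₁' = g₂' * k₂' :=
  ((hg₁.comp x hk₁).congr_of_eventuallyEq hcomp.symm).unique (hg₂.comp x hk₂)

theorem Real.log_norm_eq_add_sub_of_mul_eq {E : Type*} [NormedDivisionRing E] {a b c d : E}
    (habcd : a * b = c * d) (hb : b ≠ 0) (hc : c ≠ 0) (hd : d ≠ 0) :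
    Real.log ‖a‖ = Real.log ‖d‖ + (Real.log ‖c‖ - Real.log ‖b‖) := by
  have ha : a ≠ 0 := by
    rintro rfl
    exact mul_ne_zero hc hd (by simpa using habcd.symm)
  have hlog := congrArg (fun z => Real.log ‖z‖) habcd
  simp only [norm_mul] at hlog
  rw [Real.log_mul (norm_ne_zero_iff.mpr ha) (norm_ne_zero_iff.mpr hb),
    Real.log_mul (norm_ne_zero_iff.mpr hc) (norm_ne_zero_iff.mpr hd)] at hlog
  linarith

theorem MeasureTheory.integral_comp_add_right_sub_eq_zero {G : Type*} [MeasurableSpace G]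
    [AddGroup G] [MeasurableAdd G] {μ : Measure G} [μ.IsAddRightInvariant] {u : G → ℝ}
    (hu : Integrable u μ) (a : G) :
    ∫ x, (u (x + a) - u x) ∂μ = 0 := by
  rw [integral_sub (hu.comp_add_right a) hu, integral_add_right_eq_self u a, sub_self]

theorem Continuous.integrable_log_norm {X E : Type*} [TopologicalSpace X] [CompactSpace X]
    [MeasurableSpace X] [OpensMeasurableSpace X] {μ : Measure X} [IsFiniteMeasure μ]
    [NormedAddCommGroup E] {g : X → E} (hg : Continuous g) (hg0 : ∀ x, g x ≠ 0) :
    Integrable (fun x => Real.log ‖g x‖) μ :=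
  (hg.norm.log fun x => norm_ne_zero_iff.mpr (hg0 x)).integrable_of_hasCompactSupport
    (HasCompactSupport.of_compactSpace _)

theorem lyapunov_exponent_invariance_general
    (α ν : UnitAddCircle) (γ : UnitAddCircle → ℂ)
    (f ftil h : UnitAddCircle → ℂ → ℂ)
    (f' h' F' : UnitAddCircle → ℂ)
    (hinv : ∀ θ, f θ (γ θ) = γ (θ + α))
    (hdf : ∀ θ, HasDerivAt (f θ) (f' θ) (γ θ))
    (hf0 : ∀ θ, f' θ ≠ 0)
    (hdh : ∀ θ, HasDerivAt (h θ) (h' θ) (γ θ))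
    (hh0 : ∀ θ, h' θ ≠ 0)
    (hdF : ∀ θ, HasDerivAt (ftil (θ + ν)) (F' (θ + ν)) (h θ (γ θ)))
    (hconj : ∀ θ, ∀ᶠ z in nhds (γ θ), ftil (θ + ν) (h θ z) = h (θ + α) (f θ z))
    (hcf : Continuous f') (hch : Continuous h') :
    ∫ φ : UnitAddCircle, Real.log ‖F' φ‖
      = ∫ θ : UnitAddCircle, Real.log ‖f' θ‖ := by
  have hmul : ∀ θ, F' (θ + ν) * h' θ = h' (θ + α) * f' θ := fun θ =>
    (hdF θ).mul_eq_mul_of_comp_eventuallyEq (hdh θ) (hinv θ ▸ hdh (θ + α)) (hdf θ) (hconj θ)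
  have hlog : ∀ θ, Real.log ‖F' (θ + ν)‖
      = Real.log ‖f' θ‖ + (Real.log ‖h' (θ + α)‖ - Real.log ‖h' θ‖) := fun θ =>
    Real.log_norm_eq_add_sub_of_mul_eq (hmul θ) (hh0 θ) (hh0 (θ + α)) (hf0 θ)
  have hlogh' : Integrable (fun θ => Real.log ‖h' θ‖) := hch.integrable_log_norm hh0
  calc ∫ φ, Real.log ‖F' φ‖ = ∫ θ, Real.log ‖F' (θ + ν)‖ :=
        (integral_add_right_eq_self _ ν).symm
    _ = (∫ θ, Real.log ‖f' θ‖) + ∫ θ, (Real.log ‖h' (θ + α)‖ - Real.log ‖h' θ‖) := by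
        simp_rw [hlog]
        exact integral_add (hcf.integrable_log_norm hf0) ((hlogh'.comp_add_right α).sub hlogh')
    _ = ∫ θ, Real.log ‖f' θ‖ := by
        rw [integral_comp_add_right_sub_eq_zero hlogh' α, add_zero]

/-- Part 2 of the Lemma on invariance of the fibered multiplier: the Lyapunov exponent
of an invariant curve is preserved under fibered conformal conjugacy up to angle
translation `ν`. -/
theorem lyapunov_exponent_invariance
    (α ν : UnitAddCircle) (γ : UnitAddCircle → ℂ) (hγ : Continuous γ)
    (f ftil h : UnitAddCircle → ℂ → ℂ)
    (f' h' F' : UnitAddCircle → ℂ)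
    (hinv : ∀ θ, f θ (γ θ) = γ (θ + α))
    (hdf : ∀ θ, HasDerivAt (f θ) (f' θ) (γ θ))
    (hf0 : ∀ θ, f' θ ≠ 0)
    (hdh : ∀ θ, HasDerivAt (h θ) (h' θ) (γ θ))
    (hh0 : ∀ θ, h' θ ≠ 0)
    (hdF : ∀ θ, HasDerivAt (ftil (θ + ν)) (F' (θ + ν)) (h θ (γ θ)))
    (hconj : ∀ θ, ∀ᶠ z in nhds (γ θ), ftil (θ + ν) (h θ z) = h (θ + α) (f θ z))
    (hcf : Continuous f') (hch : Continuous h') :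
    ∫ φ : UnitAddCircle, Real.log ‖F' φ‖
      = ∫ θ : UnitAddCircle, Real.log ‖f' θ‖ :=
  lyapunov_exponent_invariance_general α ν γ f ftil h f' h' F' hinv hdf hf0 hdh hh0 hdF hconj hcf
    hch
end

section
/- Let 𝕋 := ℝ/ℤ with its Haar probability measure, let α, ν ∈ 𝕋, and let m, η ∈ ℤ. For k ∈ ℤ and θ ∈ 𝕋, write e(kθ) for the well-defined complex number exp(2πik·θ̂), where θ̂ ∈ ℝ is any lift of θ. Let g, H : 𝕋 → ℂ be continuous and nowhere vanishing, and suppose there exist continuous functions ℓ_g, ℓ_H : 𝕋 → ℂ such that exp(ℓ_g(θ)) = e(−mθ)·g(θ) and exp(ℓ_H(θ)) = e(−ηθ)·H(θ) for all θ ∈ 𝕋. Define g̃ : 𝕋 → ℂ by g̃(φ) := (H(φ−ν+α) / H(φ−ν)) · g(φ−ν). Then there exists a continuous function ℓ̃ : 𝕋 → ℂ with exp(ℓ̃(φ)) = e(−mφ)·g̃(φ) for all φ ∈ 𝕋, and moreover exp(∫_𝕋 ℓ̃) = e(ηα) · e(−mν) · exp(∫_𝕋 ℓ_g). -/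
open MeasureTheory

lemma fourier_add_arg {T : ℝ} {n : ℤ} (x y : AddCircle T) :
    (fourier n (x + y) : ℂ) = fourier n x * fourier n y := by
  simp_rw [fourier_apply, smul_add, AddCircle.toCircle_add, Circle.coe_mul]

lemma fourier_ne_zero' {T : ℝ} {n : ℤ} (x : AddCircle T) : (fourier n x : ℂ) ≠ 0 :=
  Circle.coe_ne_zero _

lemma integral_comp_add_const {f : UnitAddCircle → ℂ} (hf : Continuous f)
    (a : UnitAddCircle) : ∫ φ, f (φ + a) = ∫ φ, f φ :=
  integral_add_right_eq_self f a

/-- Part 3 of the Lemma on invariance of the fibered multiplier: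
`κ(γ̃) = e^{2πi(ηα − mν)} κ(γ)`. Here `fourier k θ = exp (2πik θ̂)` for any real lift
`θ̂` of `θ`, `g θ = f_θ'(γ θ)` is the derivative cocycle of index `m` (with continuous
logarithm branch `ℓg`), `H θ = h_θ'(γ θ)` that of the conjugacy of index `η` (with
branch `ℓH`), and `g̃ φ = (H(φ−ν+α)/H(φ−ν))·g(φ−ν)` is the conjugated cocycle. -/
theorem fibered_multiplier_transform
    (α ν : UnitAddCircle) (m η : ℤ)
    (g H : UnitAddCircle → ℂ) (hg : Continuous g) (hH : Continuous H)
    (hg0 : ∀ θ, g θ ≠ 0) (hH0 : ∀ θ, H θ ≠ 0)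
    (ℓg ℓH : UnitAddCircle → ℂ) (hℓg : Continuous ℓg) (hℓH : Continuous ℓH)
    (heg : ∀ θ, Complex.exp (ℓg θ) = fourier (-m) θ * g θ)
    (heH : ∀ θ, Complex.exp (ℓH θ) = fourier (-η) θ * H θ) :
    ∃ ℓ : UnitAddCircle → ℂ, Continuous ℓ ∧
      (∀ φ, Complex.exp (ℓ φ)
          = fourier (-m) φ * (H (φ - ν + α) / H (φ - ν) * g (φ - ν))) ∧
      Complex.exp (∫ φ, ℓ φ)
        = fourier η α * fourier (-m) ν * Complex.exp (∫ θ, ℓg θ) := by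
  set c : ℂ := Complex.log (fourier η α * fourier (-m) ν) with hc
  have hcexp : Complex.exp c = fourier η α * fourier (-m) ν :=
    Complex.exp_log (mul_ne_zero (fourier_ne_zero' α) (fourier_ne_zero' ν))
  refine ⟨fun φ => ℓH (φ - ν + α) - ℓH (φ - ν) + ℓg (φ - ν) + c,
    by fun_prop, ?_, ?_⟩
  · intro φ
    rw [Complex.exp_add, Complex.exp_add, Complex.exp_sub, heH, heH, heg, hcexp]
    have h1 : (fourier (-η) (φ - ν + α) : ℂ) = fourier (-η) (φ - ν) * fourier (-η) α :=
      fourier_add_arg _ _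
    have h2 : (fourier (-m) (φ - ν) : ℂ) = fourier (-m) φ * fourier (-m) (-ν) := by
      rw [← fourier_add_arg, ← sub_eq_add_neg]
    have h3 : (fourier (-η) α : ℂ) = (fourier η α : ℂ)⁻¹ := by
      refine eq_inv_of_mul_eq_one_left ?_
      rw [← fourier_add (T := 1), neg_add_cancel, fourier_zero]
    have h4 : (fourier (-m) (-ν) : ℂ) = (fourier (-m) ν : ℂ)⁻¹ := by
      refine eq_inv_of_mul_eq_one_left ?_
      rw [← fourier_add_arg, neg_add_cancel, fourier_eval_zero]
    rw [h1, h2, h3, h4]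
    have hA := fourier_ne_zero' (T := 1) (n := -η) (φ - ν)
    have hB := fourier_ne_zero' (T := 1) (n := η) α
    have hC := fourier_ne_zero' (T := 1) (n := -m) ν
    generalize (fourier (-η) (φ - ν) : ℂ) = A at hA ⊢
    generalize (fourier η α : ℂ) = B at hB ⊢
    generalize (fourier (-m) ν : ℂ) = C at hC ⊢
    have hHb := hH0 (φ - ν)
    field_simp
  · -- integral computation
    have int_of_cont : ∀ (f : UnitAddCircle → ℂ), Continuous f → Integrable f := by
      intro f hf
      exact hf.integrable_of_hasCompactSupport (HasCompactSupport.of_compactSpace f)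
    have e1 : (fun φ : UnitAddCircle => ℓH (φ - ν + α)) = fun φ => ℓH (φ + (α - ν)) := by
      funext φ; congr 1; abel
    have e2 : (fun φ : UnitAddCircle => ℓH (φ - ν)) = fun φ => ℓH (φ + (-ν)) := by
      funext φ; congr 1; abel
    have e3 : (fun φ : UnitAddCircle => ℓg (φ - ν)) = fun φ => ℓg (φ + (-ν)) := by
      funext φ; congr 1; abel
    have i1 : Integrable (fun φ : UnitAddCircle => ℓH (φ - ν + α)) :=
      int_of_cont _ (by fun_prop)
    have i2 : Integrable (fun φ : UnitAddCircle => ℓH (φ - ν)) :=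
      int_of_cont _ (by fun_prop)
    have i3 : Integrable (fun φ : UnitAddCircle => ℓg (φ - ν)) :=
      int_of_cont _ (by fun_prop)
    have i4 : Integrable (fun _ : UnitAddCircle => c) := integrable_const c
    simp only []
    have i12 : Integrable (fun φ : UnitAddCircle => ℓH (φ - ν + α) - ℓH (φ - ν)) :=
      int_of_cont _ (by fun_prop)
    have i123 : Integrable
        (fun φ : UnitAddCircle => ℓH (φ - ν + α) - ℓH (φ - ν) + ℓg (φ - ν)) :=
      int_of_cont _ (by fun_prop)
    rw [integral_add i123 i4, integral_add i12 i3, integral_sub i1 i2]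
    have hI1 : ∫ φ : UnitAddCircle, ℓH (φ - ν + α) = ∫ θ, ℓH θ := by
      rw [e1]; exact integral_comp_add_const hℓH _
    have hI2 : ∫ φ : UnitAddCircle, ℓH (φ - ν) = ∫ θ, ℓH θ := by
      rw [e2]; exact integral_comp_add_const hℓH _
    have hI3 : ∫ φ : UnitAddCircle, ℓg (φ - ν) = ∫ θ, ℓg θ := by
      rw [e3]; exact integral_comp_add_const hℓg _
    have hconst : ∫ _ : UnitAddCircle, c = c := by
      rw [integral_const]
      simp [measureReal_def, UnitAddCircle.measure_univ]
    rw [hI1, hI2, hI3, hconst, sub_self, zero_add, Complex.exp_add, hcexp]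
    ring
end

section
/- Let α ∈ ℝ, δ > 0 and τ ≥ 2 be such that |α − p/q| > δ/|q|^τ for all integers p and all nonzero integers q. Then for every nonzero integer k, |1 − exp(2πikα)| > 4δ/|k|^{τ−1}. -/
/-! Choose `p` as the integer nearest to `kα`. The Diophantine condition at `p/k`, multiplied by
`|k|`, gives `|kα - p| > δ/|k|^{τ-1}`; on the other hand `|1 - e^{2πikα}| = 2|sin(π(kα - p))|`,
and Jordan's inequality `|sin x| ≥ 2|x|/π` on `|x| ≤ π/2` turns this into `≥ 4|kα - p|`. -/

open Real

def IsDiophantine (α δ τ : ℝ) : Prop :=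
  ∀ p q : ℤ, q ≠ 0 → δ / |(q : ℝ)| ^ τ < |α - p / q|

lemma IsDiophantine.div_rpow_sub_one_lt_abs_int_mul_sub {α δ τ : ℝ} (hα : IsDiophantine α δ τ)
    {k : ℤ} (hk : k ≠ 0) (p : ℤ) : δ / |(k : ℝ)| ^ (τ - 1) < |k * α - p| := by
  have hk₀ : (0 : ℝ) < |(k : ℝ)| := abs_pos.mpr (Int.cast_ne_zero.mpr hk)
  calc δ / |(k : ℝ)| ^ (τ - 1) = |(k : ℝ)| * (δ / |(k : ℝ)| ^ τ) := by
        rw [rpow_sub_one hk₀.ne']; field_simp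
    _ < |(k : ℝ)| * |α - p / k| := mul_lt_mul_of_pos_left (hα p k hk) hk₀
    _ = |k * α - p| := by
        rw [← abs_mul, mul_sub, mul_div_cancel₀ _ (Int.cast_ne_zero.mpr hk)]

lemma Real.abs_sin_pi_mul_sub_int (x : ℝ) (n : ℤ) : |sin (π * (x - n))| = |sin (π * x)| := by
  rw [mul_sub, mul_comm π (n : ℝ), sin_sub_int_mul_pi, abs_mul, abs_neg_one_zpow, one_mul]

lemma Real.two_mul_abs_sub_round_le_abs_sin_pi_mul (x : ℝ) :
    2 * |x - round x| ≤ |sin (π * x)| := by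
  have hπ : |π| = π := abs_of_pos pi_pos
  rw [← abs_sin_pi_mul_sub_int x (round x)]
  calc 2 * |x - round x| = 2 / π * |π * (x - round x)| := by
        rw [abs_mul, hπ]; field_simp
    _ ≤ |sin (π * (x - round x))| := mul_abs_le_abs_sin <| by
        rw [abs_mul, hπ]; linarith [mul_le_mul_of_nonneg_left (abs_sub_round x) pi_pos.le]

lemma Complex.norm_one_sub_exp_two_pi_mul_I_mul (x : ℝ) :
    ‖1 - Complex.exp (2 * π * Complex.I * x)‖ = 2 * |Real.sin (π * x)| := by
  have harg : (2 * π * Complex.I * x : ℂ) = Complex.I * ((2 * π * x : ℝ) : ℂ) := by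
    push_cast; ring
  rw [norm_sub_rev, harg, Complex.norm_exp_I_mul_ofReal_sub_one, norm_mul, Real.norm_ofNat,
    Real.norm_eq_abs]
  ring_nf

theorem small_divisor_bound_general
    (α δ τ : ℝ)
    (hdio : ∀ p q : ℤ, q ≠ 0 → δ / |(q : ℝ)| ^ τ < |α - p / q|) :
    ∀ k : ℤ, k ≠ 0 →
      4 * δ / |(k : ℝ)| ^ (τ - 1) <
        ‖1 - Complex.exp (2 * Real.pi * Complex.I * (k : ℂ) * (α : ℂ))‖ := by
  intro k hk
  have hdist : δ / |(k : ℝ)| ^ (τ - 1) < |k * α - round (k * α : ℝ)| :=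
    IsDiophantine.div_rpow_sub_one_lt_abs_int_mul_sub hdio hk _
  rw [mul_assoc _ (k : ℂ), ← Complex.ofReal_intCast, ← Complex.ofReal_mul,
    Complex.norm_one_sub_exp_two_pi_mul_I_mul]
  calc 4 * δ / |(k : ℝ)| ^ (τ - 1) = 2 * (2 * (δ / |(k : ℝ)| ^ (τ - 1))) := by ring
    _ < 2 * (2 * |k * α - round (k * α : ℝ)|) := by gcongr
    _ ≤ 2 * |sin (π * (k * α))| := by gcongr; exact two_mul_abs_sub_round_le_abs_sin_pi_mul _

/-- Small-divisor estimate for a Diophantine number `α` of type `τ` with constant `δ`: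
`|1 − e^{2πikα}| > 4δ/|k|^{τ−1}` for every nonzero integer `k`. -/
theorem small_divisor_bound
    (α δ τ : ℝ) (hδ : 0 < δ) (hτ : 2 ≤ τ)
    (hdio : ∀ p q : ℤ, q ≠ 0 → δ / |(q : ℝ)| ^ τ < |α - p / q|) :
    ∀ k : ℤ, k ≠ 0 →
      4 * δ / |(k : ℝ)| ^ (τ - 1) <
        ‖1 - Complex.exp (2 * Real.pi * Complex.I * (k : ℂ) * (α : ℂ))‖ :=
  small_divisor_bound_general α δ τ hdio
end

section
/- Let 𝕋 := ℝ/ℤ. For k ∈ ℤ and θ ∈ 𝕋, write e(kθ) for the well-defined complex number exp(2πik·θ̂), where θ̂ ∈ ℝ is any lift of θ. Let α ∈ ℝ, δ > 0 and τ ≥ 2 satisfy |α − p/q| > δ/|q|^τ for all integers p and nonzero integers q. Let c : ℤ → ℂ satisfy c(0) = 0 and |c(k)| ≤ C·r^{|k|} for all k, for some constants C ≥ 0 and 0 < r < 1. Then: (1) the series ∑_{k≠0} |c(k)| / |1 − exp(2πikα)| converges; (2) the function u : 𝕋 → ℂ defined by the (absolutely and uniformly convergent) series u(θ) := ∑_{k≠0}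 (c(k)/(1 − exp(2πikα))) · e(kθ) is continuous; and (3) u solves the cohomological equation u(θ + α) − u(θ) = −g(θ) for all θ ∈ 𝕋, where g(θ) := ∑_{k∈ℤ} c(k)·e(kθ) (this series also converging absolutely and uniformly). -/
/-!
Writing `u = ∑ uₖ e(kθ)`, the equation `u(θ + α) − u(θ) = −g(θ)` reads
`uₖ (e(kα) − 1) = −cₖ`, so `uₖ = cₖ / (1 − e(kα))`. The small divisors are controlled by
`|1 − e(x)| = 2 |sin πx| ≥ 4 ‖x‖_{ℝ/ℤ}` and the Diophantine condition, which give
`|1 − e(kα)| ≥ 4δ / |k|^τ`; this polynomial loss is absorbed by the exponential decay of `cₖ`,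
so the series for `u` converges absolutely and uniformly.
-/

open Real

def Diophantine (α δ τ : ℝ) : Prop :=
  ∀ p q : ℤ, q ≠ 0 → δ / |(q : ℝ)| ^ τ < |α - p / q|

theorem UnitAddCircle.fourier_coe_apply (k : ℤ) (x : ℝ) :
    fourier k (x : UnitAddCircle) = Complex.exp (2 * π * Complex.I * k * x) := by
  rw [_root_.fourier_coe_apply, Complex.ofReal_one, div_one]

theorem norm_mul_fourier {T : ℝ} (a : ℂ) (k : ℤ) (θ : AddCircle T) :
    ‖a * fourier k θ‖ = ‖a‖ := by
  rw [norm_mul, fourier_apply, Circle.norm_coe, mul_one]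

theorem four_mul_abs_sub_round_le_norm_one_sub_exp (x : ℝ) :
    4 * |x - round x| ≤ ‖1 - Complex.exp (2 * π * Complex.I * x)‖ := by
  set y := x - round x
  have hexp : Complex.exp (2 * π * Complex.I * x) = Complex.exp (Complex.I * ↑(2 * π * y)) := by
    rw [← mul_one (Complex.exp (Complex.I * _)), ← Complex.exp_int_mul_two_pi_mul_I (round x),
      ← Complex.exp_add]
    push_cast [y]
    ring_nf
  have hy : |π * y| ≤ π / 2 := by
    rw [abs_mul, abs_of_pos pi_pos]
    nlinarith [abs_sub_round x, pi_pos]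
  have hsin := mul_abs_le_abs_sin hy
  rw [hexp, norm_sub_rev, Complex.norm_exp_I_mul_ofReal_sub_one, norm_mul, Real.norm_two,
    Real.norm_eq_abs, show 2 * π * y / 2 = π * y by ring]
  rw [abs_mul, abs_of_pos pi_pos, ← mul_assoc, div_mul_cancel₀ _ pi_pos.ne'] at hsin
  linarith

namespace Diophantine

variable {α δ τ : ℝ}

theorem div_rpow_lt_abs_mul_sub_round (h : Diophantine α δ τ) (hδ : 0 ≤ δ) {k : ℤ}
    (hk : k ≠ 0) : δ / |(k : ℝ)| ^ τ < |k * α - round (k * α)| := by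
  have hk1 : (1 : ℝ) ≤ |(k : ℝ)| := by exact_mod_cast Int.one_le_abs hk
  have hkR : (k : ℝ) ≠ 0 := Int.cast_ne_zero.mpr hk
  calc δ / |(k : ℝ)| ^ τ
      ≤ |(k : ℝ)| * (δ / |(k : ℝ)| ^ τ) := le_mul_of_one_le_left (by positivity) hk1
    _ < |(k : ℝ)| * |α - round (k * α) / k| :=
        mul_lt_mul_of_pos_left (h _ k hk) (by linarith)
    _ = |k * α - round (k * α)| := by
        rw [← abs_mul, mul_sub, mul_div_cancel₀ _ hkR]

theorem four_mul_div_rpow_le_norm_one_sub_fourier (h : Diophantine α δ τ) (hδ : 0 ≤ δ)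
    {k : ℤ} (hk : k ≠ 0) : 4 * δ / |(k : ℝ)| ^ τ ≤ ‖1 - fourier k (α : UnitAddCircle)‖ := by
  have hsmall := four_mul_abs_sub_round_le_norm_one_sub_exp (k * α)
  rw [UnitAddCircle.fourier_coe_apply, mul_assoc _ (k : ℂ)]
  push_cast at hsmall
  rw [mul_div_assoc]
  linarith [h.div_rpow_lt_abs_mul_sub_round hδ hk]

end Diophantine

theorem summable_comp_natAbs {G : Type*} [AddCommGroup G] [TopologicalSpace G]
    [IsTopologicalAddGroup G] {f : ℕ → G} (hf : Summable f) :
    Summable fun k : ℤ => f k.natAbs :=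
  .of_nat_of_neg (by simpa using hf) (by simpa using hf)

theorem summable_norm_div_of_le_geometric_of_div_rpow_le {c d : ℤ → ℂ} {C r ε τ : ℝ}
    (hr0 : 0 ≤ r) (hr1 : r < 1) (hε : 0 < ε) (hc : ∀ k, ‖c k‖ ≤ C * r ^ k.natAbs)
    (hd : ∀ k : ℤ, k ≠ 0 → ε / |(k : ℝ)| ^ τ ≤ ‖d k‖) :
    Summable fun k => ‖c k‖ / ‖d k‖ := by
  set m := ⌈τ⌉₊
  have hmajorant : Summable fun k : ℤ => C / ε * ((k.natAbs : ℝ) ^ m * r ^ k.natAbs) :=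
    summable_comp_natAbs ((summable_pow_mul_geometric_of_norm_lt_one m
      (by rwa [norm_of_nonneg hr0])).mul_left (C / ε))
  refine hmajorant.of_norm_bounded_eventually ?_
  filter_upwards [Filter.eventually_cofinite_ne 0] with k hk
  have hk1 : (1 : ℝ) ≤ |(k : ℝ)| := by exact_mod_cast Int.one_le_abs hk
  have hpow : |(k : ℝ)| ^ τ ≤ (k.natAbs : ℝ) ^ m := by
    rw [Nat.cast_natAbs, Int.cast_abs, ← rpow_natCast]
    exact rpow_le_rpow_of_exponent_le hk1 (Nat.le_ceil τ)
  have hCr : 0 ≤ C * r ^ k.natAbs := (norm_nonneg _).trans (hc k)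
  calc ‖‖c k‖ / ‖d k‖‖ = ‖c k‖ / ‖d k‖ := by rw [norm_of_nonneg (by positivity)]
    _ ≤ C * r ^ k.natAbs / (ε / |(k : ℝ)| ^ τ) :=
        div_le_div₀ hCr (hc k) (by positivity) (hd k hk)
    _ = C * r ^ k.natAbs * |(k : ℝ)| ^ τ / ε := div_div_eq_mul_div _ _ _
    _ ≤ C * r ^ k.natAbs * (k.natAbs : ℝ) ^ m / ε := by gcongr
    _ = C / ε * ((k.natAbs : ℝ) ^ m * r ^ k.natAbs) := by ring

section Fourier

variable {T : ℝ}

theorem fourier_apply_add (k : ℤ) (θ β : AddCircle T) :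
    fourier k (θ + β) = fourier k θ * fourier k β := by
  simp only [fourier_apply, smul_add, AddCircle.toCircle_add, Circle.coe_mul]

theorem continuous_tsum_mul_fourier {a : ℤ → ℂ} (ha : Summable fun k => ‖a k‖) :
    Continuous fun θ : AddCircle T => ∑' k, a k * fourier k θ :=
  continuous_tsum (fun k => continuous_const.mul (fourier k).continuous) ha
    (fun k θ => (norm_mul_fourier (a k) k θ).le)

theorem tsum_div_one_sub_fourier_mul_fourier_add_sub {c : ℤ → ℂ} {β : AddCircle T}
    (hc0 : c 0 = 0) (hβ : ∀ k ≠ 0, 1 - fourier k β ≠ 0)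
    (hs : Summable fun k => ‖c k‖ / ‖1 - fourier k β‖) (θ : AddCircle T) :
    (∑' k, c k / (1 - fourier k β) * fourier k (θ + β))
      - ∑' k, c k / (1 - fourier k β) * fourier k θ = -∑' k, c k * fourier k θ := by
  have hu : ∀ φ : AddCircle T, Summable fun k => c k / (1 - fourier k β) * fourier k φ :=
    fun φ => .of_norm (by simpa only [norm_mul_fourier, norm_div] using hs)
  have hterm : ∀ k : ℤ, c k / (1 - fourier k β) * fourier k (θ + β)
      - c k / (1 - fourier k β) * fourier k θ = -(c k * fourier k θ) := by
    intro k
    rcases eq_or_ne k 0 with rfl | hk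
    · simp [hc0]
    · rw [fourier_apply_add, div_mul_eq_mul_div, div_mul_eq_mul_div, div_sub_div_same,
        div_eq_iff (hβ k hk)]
      ring
  rw [← (hu _).tsum_sub (hu _), tsum_congr hterm, tsum_neg]

end Fourier

theorem cohomological_equation_solution_general
    (α δ τ : ℝ) (hδ : 0 < δ)
    (hdio : ∀ p q : ℤ, q ≠ 0 → δ / |(q : ℝ)| ^ τ < |α - p / q|)
    (c : ℤ → ℂ) (hc0 : c 0 = 0)
    (C r : ℝ) (hr0 : 0 < r) (hr1 : r < 1)
    (hb : ∀ k : ℤ, ‖c k‖ ≤ C * r ^ k.natAbs) :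
    Summable (fun k : ℤ =>
        ‖c k‖ /
          ‖1 - Complex.exp (2 * Real.pi * Complex.I * (k : ℂ) * (α : ℂ))‖)
    ∧ Continuous (fun θ : UnitAddCircle =>
        ∑' k : ℤ,
          c k / (1 - Complex.exp (2 * Real.pi * Complex.I * (k : ℂ) * (α : ℂ))) * fourier k θ)
    ∧ (∀ θ : UnitAddCircle, Summable fun k : ℤ => ‖c k * fourier k θ‖)
    ∧ ∀ θ : UnitAddCircle,
        (∑' k : ℤ,
            c k / (1 - Complex.exp (2 * Real.pi * Complex.I * (k : ℂ) * (α : ℂ))) *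
              fourier k (θ + (α : UnitAddCircle)))
          - (∑' k : ℤ,
              c k / (1 - Complex.exp (2 * Real.pi * Complex.I * (k : ℂ) * (α : ℂ))) *
                fourier k θ)
        = -∑' k : ℤ, c k * fourier k θ := by
  simp only [← UnitAddCircle.fourier_coe_apply]
  have hdiv (k : ℤ) (hk : k ≠ 0) : 4 * δ / |(k : ℝ)| ^ τ ≤ ‖1 - fourier k (α : UnitAddCircle)‖ :=
    Diophantine.four_mul_div_rpow_le_norm_one_sub_fourier hdio hδ.le hk
  have hs := summable_norm_div_of_le_geometric_of_div_rpow_le hr0.le hr1 (by positivity) hb hdiv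
  have hne (k : ℤ) (hk : k ≠ 0) : 1 - fourier k (α : UnitAddCircle) ≠ 0 :=
    norm_pos_iff.mp ((div_pos (by positivity) (by positivity)).trans_le (hdiv k hk))
  have hg : Summable fun k : ℤ => C * r ^ k.natAbs :=
    summable_comp_natAbs ((summable_geometric_of_lt_one hr0.le hr1).mul_left C)
  refine ⟨hs, continuous_tsum_mul_fourier (by simpa only [norm_div] using hs), fun θ => ?_,
    tsum_div_one_sub_fourier_mul_fourier_add_sub hc0 hne hs⟩
  simpa only [norm_mul_fourier] using hg.of_nonneg_of_le (fun _ => norm_nonneg _) hb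

/-- Fourier-series solution of the cohomological equation `u(θ+α) − u(θ) = −g(θ)` for a
Diophantine frequency `α` and exponentially decaying Fourier coefficients `c` with
`c 0 = 0`. Here `fourier k θ = exp (2πik θ̂)` for any real lift `θ̂` of `θ`:
(1) the series of moduli `∑_{k} |c k| / |1 − e^{2πikα}|` converges (the `k = 0` term
being `0/0 = 0`); (2) the sum `u` is continuous on the circle; (3) the Fourier series of
`g` converges absolutely, and `u(θ + α) − u(θ) = −g(θ)` for all `θ`. -/
theorem cohomological_equation_solution
    (α δ τ : ℝ) (hδ : 0 < δ) (hτ : 2 ≤ τ)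
    (hdio : ∀ p q : ℤ, q ≠ 0 → δ / |(q : ℝ)| ^ τ < |α - p / q|)
    (c : ℤ → ℂ) (hc0 : c 0 = 0)
    (C r : ℝ) (hC : 0 ≤ C) (hr0 : 0 < r) (hr1 : r < 1)
    (hb : ∀ k : ℤ, ‖c k‖ ≤ C * r ^ k.natAbs) :
    Summable (fun k : ℤ =>
        ‖c k‖ /
          ‖1 - Complex.exp (2 * Real.pi * Complex.I * (k : ℂ) * (α : ℂ))‖)
    ∧ Continuous (fun θ : UnitAddCircle =>
        ∑' k : ℤ,
          c k / (1 - Complex.exp (2 * Real.pi * Complex.I * (k : ℂ) * (α : ℂ))) * fourier k θ)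
    ∧ (∀ θ : UnitAddCircle, Summable fun k : ℤ => ‖c k * fourier k θ‖)
    ∧ ∀ θ : UnitAddCircle,
        (∑' k : ℤ,
            c k / (1 - Complex.exp (2 * Real.pi * Complex.I * (k : ℂ) * (α : ℂ))) *
              fourier k (θ + (α : UnitAddCircle)))
          - (∑' k : ℤ,
              c k / (1 - Complex.exp (2 * Real.pi * Complex.I * (k : ℂ) * (α : ℂ))) *
                fourier k θ)
        = -∑' k : ℤ, c k * fourier k θ :=
  cohomological_equation_solution_general α δ τ hδ hdio c hc0 C r hr0 hr1 hb
end

section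
/- Let 𝕋 := ℝ/ℤ and α ∈ 𝕋. Let 0 < λ < 1, 0 < ρ < 1 with ρ² < λ, let M > 0 and 0 < r ≤ 1. Let a : 𝕋 → ℂ satisfy |a(θ)| = λ for all θ, and let f be a family of maps f_θ : ℂ → ℂ such that |f_θ(z) − a(θ)·z| ≤ M·|z|² whenever |z| ≤ r, and such that the forward compositions f_θ^n := f_{θ+(n−1)α} ∘ ⋯ ∘ f_θ satisfy |f_θ^n(z)| ≤ ρ^n·|z| for all n ≥ 0, all θ, and all |z| ≤ r. Define A_n(θ) := ∏_{j=0}^{n−1} a(θ + jα) and g_θ^n(z) := f_θ^n(z) / A_n(θ). Then: (1) for every θ ∈ 𝕋 and |z| ≤ r the sequence (g_θ^n(z))_n converges, uniformly in (θ, z), to a limit g_θ(z); (2) |g_θ(z) − z| ≤ M·|z|² / (λ − ρ²) for all θ and |z| ≤ r (in particular g_θ(0) = 0); and (3) g_{θ+α}(f_θ(z)) = a(θ)·g_θ(z) for all θ and |z| ≤ r. -/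
/-- The `n`-th fiber iterate of a quasiperiodically forced system over the rotation by
`α`: `fiberIter α f n θ = f_{θ+(n−1)α} ∘ ⋯ ∘ f_{θ+α} ∘ f_θ` (with `fiberIter α f 0 θ = id`). -/
noncomputable def fiberIter (α : UnitAddCircle) (f : UnitAddCircle → ℂ → ℂ) :
    ℕ → UnitAddCircle → ℂ → ℂ
  | 0 => fun _ z => z
  | n + 1 => fun θ z => fiberIter α f n (θ + α) (f θ z)

/-!
Koenigs' argument along the fibres. Write `A_n(θ) = ∏_{j<n} a(θ+jα)` and
`g^n = f^n / A_n`. The successive differences are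
`g^{n+1} - g^n = (f_{θ+nα}(w) - a(θ+nα) w) / A_{n+1}(θ)` with `w = f_θ^n(z)`, so the
quadratic tangency estimate and `|w| ≤ ρ^n |z|` bound them by `M|z|²/λ · (ρ²/λ)^n`.
Since `ρ² < λ` this is geometric, which gives uniform convergence and, summed from `n = 0`
(where `g^0(z) = z`), the bound `M|z|²/(λ - ρ²)`. The conjugacy follows from
`g^n_{θ+α}(f_θ z) = a(θ) g^{n+1}_θ(z)` by passing to the limit.
-/

open Filter Topology

section GeometricLimit

variable {X E : Type*} [PseudoMetricSpace E] [CompleteSpace E] [Nonempty E] {u : ℕ → X → E}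
  {s : Set X} {C q : ℝ}

theorem tendsto_limUnder_of_dist_le_geometric {x : X} (hq : q < 1)
    (hu : ∀ n, dist (u n x) (u (n + 1) x) ≤ C * q ^ n) :
    Tendsto (fun n ↦ u n x) atTop (𝓝 (limUnder atTop fun n ↦ u n x)) :=
  (cauchySeq_of_le_geometric q C hq hu).tendsto_limUnder

theorem tendstoUniformlyOn_limUnder_of_dist_le_geometric (hq₀ : 0 ≤ q) (hq : q < 1)
    (hu : ∀ n, ∀ x ∈ s, dist (u n x) (u (n + 1) x) ≤ C * q ^ n) :
    TendstoUniformlyOn u (fun x ↦ limUnder atTop fun n ↦ u n x) atTop s := by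
  have hbound : Tendsto (fun n : ℕ ↦ C * q ^ n / (1 - q)) atTop (𝓝 0) := by
    simpa using ((tendsto_pow_atTop_nhds_zero_of_lt_one hq₀ hq).const_mul C).div_const (1 - q)
  rw [Metric.tendstoUniformlyOn_iff]
  intro ε hε
  filter_upwards [hbound.eventually_lt_const hε] with n hn x hx
  rw [dist_comm]
  exact (dist_le_of_le_geometric_of_tendsto q C hq (hu · x hx)
    (tendsto_limUnder_of_dist_le_geometric hq (hu · x hx)) n).trans_lt hn

end GeometricLimit

section BirkhoffProd

variable {G R : Type*} [AddMonoid G] {α θ : G} {n : ℕ}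

def birkhoffProd [CommMonoid R] (α : G) (a : G → R) (n : ℕ) (θ : G) : R :=
  ∏ j ∈ Finset.range n, a (θ + j • α)

theorem birkhoffProd_succ [CommMonoid R] (a : G → R) :
    birkhoffProd α a (n + 1) θ = birkhoffProd α a n θ * a (θ + n • α) :=
  Finset.prod_range_succ _ n

theorem birkhoffProd_succ' [CommMonoid R] (a : G → R) :
    birkhoffProd α a (n + 1) θ = a θ * birkhoffProd α a n (θ + α) := by
  simp only [birkhoffProd, Finset.prod_range_succ', zero_smul, add_zero, succ_nsmul', add_assoc]
  exact mul_comm _ _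

theorem norm_birkhoffProd [SeminormedCommRing R] [NormMulClass R] [NormOneClass R]
    {a : G → R} {lam : ℝ} (ha : ∀ θ, ‖a θ‖ = lam) : ‖birkhoffProd α a n θ‖ = lam ^ n := by
  simp [birkhoffProd, ha]

end BirkhoffProd

section FiberIter

variable {α : UnitAddCircle} {f : UnitAddCircle → ℂ → ℂ}

theorem fiberIter_succ (n : ℕ) (θ : UnitAddCircle) (z : ℂ) :
    fiberIter α f (n + 1) θ z = fiberIter α f n (θ + α) (f θ z) := rfl

theorem fiberIter_succ' (n : ℕ) (θ : UnitAddCircle) (z : ℂ) :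
    fiberIter α f (n + 1) θ z = f (θ + n • α) (fiberIter α f n θ z) := by
  induction n generalizing θ z with
  | zero => simp [fiberIter]
  | succ n ih => rw [fiberIter_succ, ih, ← fiberIter_succ, succ_nsmul', add_assoc]

theorem norm_fiberIter_le_of_le_pow_mul {ρ r : ℝ} (hρ0 : 0 ≤ ρ) (hρ1 : ρ ≤ 1) {n : ℕ}
    {θ : UnitAddCircle} {z : ℂ} (hz : ‖z‖ ≤ r) (hit : ‖fiberIter α f n θ z‖ ≤ ρ ^ n * ‖z‖) :
    ‖fiberIter α f n θ z‖ ≤ r :=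
  (hit.trans (mul_le_of_le_one_left (norm_nonneg z) (pow_le_one₀ hρ0 hρ1))).trans hz

end FiberIter

section Koenigs

variable {α : UnitAddCircle} {f : UnitAddCircle → ℂ → ℂ} {a : UnitAddCircle → ℂ}

noncomputable def koenigsIter (α : UnitAddCircle) (f : UnitAddCircle → ℂ → ℂ)
    (a : UnitAddCircle → ℂ) (n : ℕ) (θ : UnitAddCircle) (z : ℂ) : ℂ :=
  fiberIter α f n θ z / birkhoffProd α a n θ

theorem koenigsIter_zero (θ : UnitAddCircle) (z : ℂ) : koenigsIter α f a 0 θ z = z := by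
  simp [koenigsIter, fiberIter, birkhoffProd]

theorem koenigsIter_succ_sub {n : ℕ} {θ : UnitAddCircle} (z : ℂ) (ha : a (θ + n • α) ≠ 0) :
    koenigsIter α f a (n + 1) θ z - koenigsIter α f a n θ z =
      (f (θ + n • α) (fiberIter α f n θ z) - a (θ + n • α) * fiberIter α f n θ z) /
        birkhoffProd α a (n + 1) θ := by
  rw [koenigsIter, koenigsIter, fiberIter_succ', birkhoffProd_succ, sub_div,
    mul_comm (a _), mul_div_mul_right _ _ ha]

theorem koenigsIter_shift (n : ℕ) {θ : UnitAddCircle} (z : ℂ) (ha : a θ ≠ 0) :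
    koenigsIter α f a n (θ + α) (f θ z) = a θ * koenigsIter α f a (n + 1) θ z := by
  rw [koenigsIter, koenigsIter, fiberIter_succ, birkhoffProd_succ', ← mul_div_assoc,
    mul_div_mul_left _ _ ha]

theorem norm_koenigsIter_succ_sub_le {lam ρ M r : ℝ} (hl0 : 0 < lam) (hρ0 : 0 ≤ ρ) (hρ1 : ρ ≤ 1)
    (hM : 0 ≤ M) (ha : ∀ θ, ‖a θ‖ = lam)
    (hf : ∀ θ z, ‖z‖ ≤ r → ‖f θ z - a θ * z‖ ≤ M * ‖z‖ ^ 2) {n : ℕ} {θ : UnitAddCircle} {z : ℂ}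
    (hz : ‖z‖ ≤ r) (hit : ‖fiberIter α f n θ z‖ ≤ ρ ^ n * ‖z‖) :
    ‖koenigsIter α f a (n + 1) θ z - koenigsIter α f a n θ z‖ ≤
      M * ‖z‖ ^ 2 / lam * (ρ ^ 2 / lam) ^ n := by
  have hwr := norm_fiberIter_le_of_le_pow_mul hρ0 hρ1 hz hit
  have ha0 : a (θ + n • α) ≠ 0 := norm_ne_zero_iff.mp (by rw [ha]; exact hl0.ne')
  rw [koenigsIter_succ_sub z ha0, norm_div, norm_birkhoffProd ha]
  calc _ ≤ M * (ρ ^ n * ‖z‖) ^ 2 / lam ^ (n + 1) := by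
        gcongr
        exact (hf _ _ hwr).trans (by gcongr)
    _ = M * ‖z‖ ^ 2 / lam * (ρ ^ 2 / lam) ^ n := by
        rw [div_pow, ← pow_mul, mul_comm 2 n, pow_mul]
        field_simp
        ring

end Koenigs

theorem fibered_koenigs_general
    (α : UnitAddCircle) (lam ρ M r : ℝ)
    (hl0 : 0 < lam) (hρ0 : 0 < ρ) (hρ1 : ρ < 1) (hρlam : ρ ^ 2 < lam)
    (hM : 0 < M)
    (a : UnitAddCircle → ℂ) (ha : ∀ θ, ‖a θ‖ = lam)
    (f : UnitAddCircle → ℂ → ℂ)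
    (hf : ∀ θ z, ‖z‖ ≤ r →
      ‖f θ z - a θ * z‖ ≤ M * ‖z‖ ^ 2)
    (hit : ∀ (n : ℕ) (θ : UnitAddCircle) (z : ℂ), ‖z‖ ≤ r →
      ‖fiberIter α f n θ z‖ ≤ ρ ^ n * ‖z‖) :
    ∃ g : UnitAddCircle → ℂ → ℂ,
      TendstoUniformlyOn
        (fun (n : ℕ) (p : UnitAddCircle × ℂ) =>
          fiberIter α f n p.1 p.2 / ∏ j ∈ Finset.range n, a (p.1 + j • α))
        (fun p => g p.1 p.2) Filter.atTop {p : UnitAddCircle × ℂ | ‖p.2‖ ≤ r}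
      ∧ (∀ θ z, ‖z‖ ≤ r →
          ‖g θ z - z‖ ≤ M * ‖z‖ ^ 2 / (lam - ρ ^ 2))
      ∧ ∀ θ z, ‖z‖ ≤ r → g (θ + α) (f θ z) = a θ * g θ z := by
  have hq₀ : 0 ≤ ρ ^ 2 / lam := by positivity
  have hq : ρ ^ 2 / lam < 1 := (div_lt_one hl0).2 hρlam
  have hstep : ∀ n θ z, ‖z‖ ≤ r →
      dist (koenigsIter α f a n θ z) (koenigsIter α f a (n + 1) θ z) ≤
        M * ‖z‖ ^ 2 / lam * (ρ ^ 2 / lam) ^ n := fun n θ z hz => by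
    rw [dist_comm, dist_eq_norm]
    exact norm_koenigsIter_succ_sub_le hl0 hρ0.le hρ1.le hM.le ha hf hz (hit n θ z hz)
  have hlim θ z (hz : ‖z‖ ≤ r) := tendsto_limUnder_of_dist_le_geometric hq (hstep · θ z hz)
  refine ⟨fun θ z => limUnder atTop fun n => koenigsIter α f a n θ z, ?_, ?_, ?_⟩
  · refine tendstoUniformlyOn_limUnder_of_dist_le_geometric (C := M * r ^ 2 / lam) hq₀ hq ?_
    rintro n ⟨θ, z⟩ hz
    refine (hstep n θ z hz).trans ?_
    gcongr
    exact hz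
  · intro θ z hz
    have := dist_le_of_le_geometric_of_tendsto₀ _ _ hq (hstep · θ z hz) (hlim θ z hz)
    rw [koenigsIter_zero, dist_comm, dist_eq_norm] at this
    refine this.trans_eq ?_
    field_simp
  · intro θ z hz
    have ha0 : a θ ≠ 0 := norm_ne_zero_iff.mp (by rw [ha]; exact hl0.ne')
    have hfz : ‖f θ z‖ ≤ r := norm_fiberIter_le_of_le_pow_mul hρ0.le hρ1.le hz (hit 1 θ z hz)
    refine tendsto_nhds_unique (hlim _ _ hfz) ?_
    simp only [koenigsIter_shift _ z ha0]
    exact ((hlim θ z hz).comp (tendsto_add_atTop_nat 1)).const_mul _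

/-- Fibered Koenigs linearization: the normalized iterates
`g_θ^n(z) = f_θ^n(z) / ∏_{j<n} a(θ+jα)` converge uniformly on `{|z| ≤ r}` to a fibered
map `g` with `|g_θ(z) − z| ≤ M|z|²/(λ − ρ²)` satisfying `g_{θ+α}(f_θ(z)) = a(θ)·g_θ(z)`. -/
theorem fibered_koenigs
    (α : UnitAddCircle) (lam ρ M r : ℝ)
    (hl0 : 0 < lam) (hl1 : lam < 1) (hρ0 : 0 < ρ) (hρ1 : ρ < 1) (hρlam : ρ ^ 2 < lam)
    (hM : 0 < M) (hr0 : 0 < r) (hr1 : r ≤ 1)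
    (a : UnitAddCircle → ℂ) (ha : ∀ θ, ‖a θ‖ = lam)
    (f : UnitAddCircle → ℂ → ℂ)
    (hf : ∀ θ z, ‖z‖ ≤ r →
      ‖f θ z - a θ * z‖ ≤ M * ‖z‖ ^ 2)
    (hit : ∀ (n : ℕ) (θ : UnitAddCircle) (z : ℂ), ‖z‖ ≤ r →
      ‖fiberIter α f n θ z‖ ≤ ρ ^ n * ‖z‖) :
    ∃ g : UnitAddCircle → ℂ → ℂ,
      TendstoUniformlyOn
        (fun (n : ℕ) (p : UnitAddCircle × ℂ) =>
          fiberIter α f n p.1 p.2 / ∏ j ∈ Finset.range n, a (p.1 + j • α))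
        (fun p => g p.1 p.2) Filter.atTop {p : UnitAddCircle × ℂ | ‖p.2‖ ≤ r}
      ∧ (∀ θ z, ‖z‖ ≤ r →
          ‖g θ z - z‖ ≤ M * ‖z‖ ^ 2 / (lam - ρ ^ 2))
      ∧ ∀ θ z, ‖z‖ ≤ r → g (θ + α) (f θ z) = a θ * g θ z :=
  fibered_koenigs_general α lam ρ M r hl0 hρ0 hρ1 hρlam hM a ha f hf hit
end

section
/- Let χ₀, χ ∈ ℂ with Re χ₀ < 0, and set b := (χ − χ₀)/(2·Re χ₀), κ₀ := exp(χ₀), κ := exp(χ). Define φ : ℂ → ℂ by φ(0) := 0 and φ(z) := z · exp(2b·log|z|) for z ≠ 0 (where log|z| is the real logarithm of the modulus). Then for every z ∈ ℂ and every u ∈ ℂ with |u| = 1, one has φ(κ₀·u·z) = κ·u·φ(z). -/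
/-! The stretch `z ↦ z·e^{c log|z|}` satisfies `φ(wz) = w·e^{c log|w|}·φ(z)` for `w ≠ 0`.
For `w = e^{χ₀}u` with `|u| = 1` we have `log|w| = Re χ₀`, and `b` is chosen exactly so that
`2b·Re χ₀ = χ − χ₀`, turning the factor `e^{χ₀}u·e^{2b Re χ₀}` into `e^{χ}u`. -/

open Complex

noncomputable def radialStretch (c z : ℂ) : ℂ :=
  z * exp (c * (Real.log ‖z‖ : ℂ))

theorem radialStretch_zero (c : ℂ) : radialStretch c 0 = 0 := by
  simp [radialStretch]

theorem radialStretch_mul (c : ℂ) {w : ℂ} (hw : w ≠ 0) (z : ℂ) :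
    radialStretch c (w * z) = w * exp (c * (Real.log ‖w‖ : ℂ)) * radialStretch c z := by
  rcases eq_or_ne z 0 with rfl | hz
  · simp [radialStretch_zero]
  · have hlog : Real.log ‖w * z‖ = Real.log ‖w‖ + Real.log ‖z‖ := by
      rw [norm_mul, Real.log_mul (norm_ne_zero_iff.mpr hw) (norm_ne_zero_iff.mpr hz)]
    simp only [radialStretch, hlog, ofReal_add, mul_add, exp_add]
    ring

theorem eq_radialStretch {φ : ℂ → ℂ} {c : ℂ} (hφ0 : φ 0 = 0)
    (hφ : ∀ z : ℂ, z ≠ 0 → φ z = z * exp (c * (Real.log ‖z‖ : ℂ))) :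
    φ = radialStretch c := by
  funext z
  rcases eq_or_ne z 0 with rfl | hz
  · rw [hφ0, radialStretch_zero]
  · exact hφ z hz

theorem log_norm_exp_mul_of_norm_eq_one (χ : ℂ) {u : ℂ} (hu : ‖u‖ = 1) :
    Real.log ‖exp χ * u‖ = χ.re := by
  rw [norm_mul, hu, mul_one, norm_exp, Real.log_exp]

/-- The generalized radial stretching `φ(z) = z·e^{2b log|z|}` with
`b = (χ − χ₀)/(2 Re χ₀)` conjugates multiplication by `κ₀·u = e^{χ₀}·u` to
multiplication by `κ·u = e^{χ}·u`, for any unimodular `u`. -/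
theorem radial_stretch_conjugacy (χ₀ χ : ℂ) (h0 : χ₀.re < 0)
    (b : ℂ) (hb : b = (χ - χ₀) / (2 * (χ₀.re : ℂ)))
    (φ : ℂ → ℂ) (hφ0 : φ 0 = 0)
    (hφ : ∀ z : ℂ, z ≠ 0 →
      φ z = z * Complex.exp (2 * b * (Real.log ‖z‖ : ℂ))) :
    ∀ z u : ℂ, ‖u‖ = 1 →
      φ (Complex.exp χ₀ * u * z) = Complex.exp χ * u * φ z := by
  intro z u hu
  obtain rfl := eq_radialStretch hφ0 hφ
  have hu0 : u ≠ 0 := norm_ne_zero_iff.mp (by rw [hu]; exact one_ne_zero)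
  have hre : (χ₀.re : ℂ) ≠ 0 := ofReal_ne_zero.mpr h0.ne
  have hexponent : 2 * b * (χ₀.re : ℂ) = χ - χ₀ := by
    rw [hb]; field_simp
  rw [radialStretch_mul _ (mul_ne_zero (exp_ne_zero χ₀) hu0),
    log_norm_exp_mul_of_norm_eq_one χ₀ hu, hexponent,
    mul_right_comm (exp χ₀), ← exp_add, add_sub_cancel]
end
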